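/- arXiv:1912.12722 — 3 statements merged into one kernel-verified Lean document; each statement's English description precedes it below -/
import Mathlib

section
/- Let x : U → ℝ^m be smooth with x(u) ≠ 0 for all u, let c ∈ ℝ be nonzero, and define x̃(u) = (c/(x(u)·x(u))) x(u). Then the pair (x, x̃) satisfies the Ribaucour relation: there exist functions λ_i (namely λ_i = c/(x·x)) such that ∂_i x̃ = λ_i (∂_i x − 2((∂_i x · δx)/(δx·δx)) δx), where δx = x̃ − x, provided δx is nowhere zero (i.e. x·x ≠ c everywhere). -/
open RealInnerProductSpace

noncomputable abbrev E (n : ℕ) := EuclideanSpace ℝ (Fin n)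

/-- Partial derivative in the `i`-th coordinate direction. -/
noncomputable def pd {n m : ℕ} (i : Fin n) (f : E n → E m) (u : E n) : E m :=
  fderiv ℝ f u (EuclideanSpace.single i (1 : ℝ))


theorem stmt_3 {n m : ℕ} (U : Set (E n)) (hU : IsOpen U)
    (x : E n → E m) (hx : ContDiffOn ℝ (⊤ : ℕ∞) x U)
    (hx0 : ∀ u ∈ U, x u ≠ 0)
    (c : ℝ) (hc : c ≠ 0)
    (hδ0 : ∀ u ∈ U, ⟪x u, x u⟫ ≠ c)
    (xt : E n → E m) (hxtdef : ∀ u, xt u = (c / ⟪x u, x u⟫) • x u) :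
    ∀ i : Fin n, ∀ u ∈ U,
      pd i xt u = (c / ⟪x u, x u⟫) •
        (pd i x u - (2 * ⟪pd i x u, xt u - x u⟫ / ⟪xt u - x u, xt u - x u⟫) • (xt u - x u)) := by
  intro i u hu
  have hdx : DifferentiableAt ℝ x u :=
    (hx.contDiffAt (hU.mem_nhds hu)).differentiableAt (by simp)
  have hr0 : ⟪x u, x u⟫ ≠ 0 := inner_self_ne_zero.mpr (hx0 u hu)
  set r : ℝ := ⟪x u, x u⟫ with hrdef
  set X := x u with hX
  set a := fderiv ℝ x u (EuclideanSpace.single i (1:ℝ)) with ha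
  have hpa : pd i x u = a := rfl
  have hrdiff : DifferentiableAt ℝ (fun v => ⟪x v, x v⟫) u := hdx.inner ℝ hdx
  -- derivative of the inner product
  have hinner : fderiv ℝ (fun v => ⟪x v, x v⟫) u (EuclideanSpace.single i 1) = 2 * ⟪a, X⟫ := by
    rw [fderiv_inner_apply (𝕜 := ℝ) hdx hdx]
    rw [← ha, ← hX, real_inner_comm X a]; ring
  -- derivative of c / r
  have hderivc : HasDerivAt (fun t : ℝ => c / t) (-(c / r ^ 2)) r := by
    have := (hasDerivAt_inv hr0).const_mul c
    simpa [div_eq_mul_inv, neg_div, mul_div_assoc] using this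
  have hcomp : HasFDerivAt (fun v => c / ⟪x v, x v⟫) ((-(c / r ^ 2)) • fderiv ℝ (fun v => ⟪x v, x v⟫) u) u := by
    exact hderivc.comp_hasFDerivAt u hrdiff.hasFDerivAt
  have hfdiff : DifferentiableAt ℝ (fun v => c / ⟪x v, x v⟫) u := hcomp.differentiableAt
  have hcval : fderiv ℝ (fun v => c / ⟪x v, x v⟫) u (EuclideanSpace.single i 1)
      = -(c / r ^ 2) * (2 * ⟪a, X⟫) := by
    rw [hcomp.fderiv, ContinuousLinearMap.smul_apply, hinner, smul_eq_mul]
  -- main derivative computation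
  have hmain : pd i xt u = (c / r) • a - (c * (2 * ⟪a, X⟫) / r ^ 2) • X := by
    have hxteq : xt = fun v => (c / ⟪x v, x v⟫) • x v := funext hxtdef
    rw [pd, hxteq, fderiv_fun_smul hfdiff hdx]
    simp only [ContinuousLinearMap.add_apply, ContinuousLinearMap.smul_apply,
      ContinuousLinearMap.smulRight_apply, hcval]
    rw [← ha, ← hX]
    module
  rw [hpa, hmain, hxtdef u]
  rw [← hrdef, ← hX]
  have hδ : (c / r) • X - X = (c / r - 1) • X := by module
  rw [hδ]
  set t : ℝ := c / r - 1 with ht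
  have ht0 : t ≠ 0 := by
    rw [ht]
    intro h
    apply hδ0 u hu
    have : c / r = 1 := by linarith [sub_eq_zero.mp h]
    field_simp at this
    rw [← hrdef]; linarith
  have h1 : ⟪a, t • X⟫ = t * ⟪a, X⟫ := real_inner_smul_right _ _ _
  have h2 : ⟪t • X, t • X⟫ = t ^ 2 * r := by
    rw [real_inner_smul_left, real_inner_smul_right, ← hrdef]; ring
  rw [h1, h2, smul_smul, smul_sub, smul_smul]
  congr 1
  congr 1
  field_simp
end

section
/- Let x : U → ℝ^m be smooth with x(u)·x(u) never equal to 0, and let x̃ = (c/(x·x)) x with c ≠ 0. Suppose x satisfies ∂_i ∂_j x = c_{ij}^i ∂_i x + c_{ij}^j ∂_j x for i ≠ j and ∂_i x · ∂_j x = 0 for i ≠ j. Then x̃ also satisfies equations of the same form: there exist smooth functions c̃_{ij}^i, c̃_{ij}^j with ∂_i ∂_j x̃ = c̃_{ij}^i ∂_i x̃ + c̃_{ij}^j ∂_j x̃ for i ≠ j, at points where ∂_i x̃ and ∂_j x̃ are linearly independent and nonzero. -/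
open RealInnerProductSpace

/-- Second mixed partial derivative. -/
noncomputable def pd2 {n m : ℕ} (i j : Fin n) (f : E n → E m) (u : E n) : E m :=
  pd i (pd j f) u

section helpers

/-- Directional derivative for maps into any normed space. -/
noncomputable def D {n : ℕ} {F : Type*} [NormedAddCommGroup F] [NormedSpace ℝ F]
    (i : Fin n) (f : E n → F) (u : E n) : F :=
  fderiv ℝ f u (EuclideanSpace.single i (1 : ℝ))

variable {n m : ℕ} {F : Type*} [NormedAddCommGroup F] [NormedSpace ℝ F]

lemma pd_eq_D (i : Fin n) (f : E n → E m) (u : E n) : pd i f u = D i f u := rfl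

lemma pd2_eq_D (i j : Fin n) (f : E n → E m) (u : E n) : pd2 i j f u = D i (D j f) u := rfl

lemma D_congr {f g : E n → F} {U : Set (E n)} (hU : IsOpen U) (h : ∀ v ∈ U, f v = g v)
    {u : E n} (hu : u ∈ U) (i : Fin n) : D i f u = D i g u := by
  unfold D
  rw [Filter.EventuallyEq.fderiv_eq (Filter.eventuallyEq_of_mem (hU.mem_nhds hu) h)]

lemma D_add {f g : E n → F} {u : E n} (hf : DifferentiableAt ℝ f u)
    (hg : DifferentiableAt ℝ g u) (i : Fin n) :
    D i (fun v => f v + g v) u = D i f u + D i g u := by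
  unfold D; rw [fderiv_fun_add hf hg]; rfl

lemma D_neg {f : E n → F} {u : E n} (i : Fin n) :
    D i (fun v => -f v) u = -D i f u := by
  unfold D; rw [fderiv_fun_neg]; rfl

lemma D_smul {f : E n → ℝ} {g : E n → F} {u : E n} (hf : DifferentiableAt ℝ f u)
    (hg : DifferentiableAt ℝ g u) (i : Fin n) :
    D i (fun v => f v • g v) u = D i f u • g u + f u • D i g u := by
  unfold D; rw [fderiv_fun_smul hf hg]; simp [add_comm]

lemma D_mul {f g : E n → ℝ} {u : E n} (hf : DifferentiableAt ℝ f u)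
    (hg : DifferentiableAt ℝ g u) (i : Fin n) :
    D i (fun v => f v * g v) u = D i f u * g u + f u * D i g u := by
  unfold D; rw [fderiv_fun_mul hf hg]; simp; ring

lemma D_const_mul {f : E n → ℝ} {u : E n} (hf : DifferentiableAt ℝ f u) (c : ℝ) (i : Fin n) :
    D i (fun v => c * f v) u = c * D i f u := by
  unfold D; rw [fderiv_const_mul hf]; simp

lemma D_inv {f : E n → ℝ} {u : E n} (hf : DifferentiableAt ℝ f u) (hne : f u ≠ 0) (i : Fin n) :
    D i (fun v => (f v)⁻¹) u = -(D i f u) / (f u)^2 := by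
  unfold D
  have : HasFDerivAt (fun v => (f v)⁻¹)
      (((ContinuousLinearMap.smulRight (1 : ℝ →L[ℝ] ℝ) (-((f u) ^ 2)⁻¹))).comp (fderiv ℝ f u)) u :=
    (hasFDerivAt_inv hne).comp u hf.hasFDerivAt
  rw [this.fderiv]
  simp [div_eq_mul_inv]

lemma D_inner {f g : E n → E m} {u : E n} (hf : DifferentiableAt ℝ f u)
    (hg : DifferentiableAt ℝ g u) (i : Fin n) :
    D i (fun v => ⟪f v, g v⟫) u = ⟪f u, D i g u⟫ + ⟪D i f u, g u⟫ :=
  fderiv_inner_apply ℝ hf hg _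

lemma contDiffOn_D {f : E n → F} {U : Set (E n)} (hU : IsOpen U)
    (hf : ContDiffOn ℝ (⊤ : ℕ∞) f U) (i : Fin n) : ContDiffOn ℝ (⊤ : ℕ∞) (D i f) U :=
  (ContinuousLinearMap.apply ℝ F (EuclideanSpace.single i (1 : ℝ))).contDiff.comp_contDiffOn
    (hf.fderiv_of_isOpen hU (by simp))

lemma diffAt {f : E n → F} {U : Set (E n)} (hU : IsOpen U)
    (hf : ContDiffOn ℝ (⊤ : ℕ∞) f U) {u : E n} (hu : u ∈ U) : DifferentiableAt ℝ f u :=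
  (hf.contDiffAt (hU.mem_nhds hu)).differentiableAt (by simp)

end helpers

theorem stmt_13 {n m : ℕ} (U : Set (E n)) (hU : IsOpen U)
    (x : E n → E m) (hx : ContDiffOn ℝ (⊤ : ℕ∞) x U)
    (hx0 : ∀ u ∈ U, ⟪x u, x u⟫ ≠ 0)
    (c : ℝ) (hc : c ≠ 0)
    (xt : E n → E m) (hxtdef : ∀ u, xt u = (c / ⟪x u, x u⟫) • x u)
    (cc : Fin n → Fin n → E n → ℝ)
    (hconj : ∀ i j : Fin n, i ≠ j → ∀ u ∈ U,
      pd2 i j x u = cc i j u • pd i x u + cc j i u • pd j x u)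
    (horth : ∀ i j : Fin n, i ≠ j → ∀ u ∈ U, ⟪pd i x u, pd j x u⟫ = 0) :
    ∃ ct : Fin n → Fin n → E n → ℝ,
      (∀ i j : Fin n, i ≠ j →
        ContDiffOn ℝ (⊤ : ℕ∞) (ct i j) {u | u ∈ U ∧ LinearIndependent ℝ ![pd i xt u, pd j xt u]}) ∧
      ∀ i j : Fin n, i ≠ j → ∀ u ∈ U,
        LinearIndependent ℝ ![pd i xt u, pd j xt u] →
        pd2 i j xt u = ct i j u • pd i xt u + ct j i u • pd j xt u := by
  classical
  obtain ⟨ρ, hρdef⟩ : ∃ ρ : E n → ℝ, ρ = fun v => ⟪x v, x v⟫ := ⟨_, rfl⟩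
  obtain ⟨g, hgdef⟩ : ∃ g : E n → ℝ, g = fun v => c * (ρ v)⁻¹ := ⟨_, rfl⟩
  have hconj' : ∀ i j : Fin n, i ≠ j → ∀ u ∈ U,
      D i (D j x) u = cc i j u • D i x u + cc j i u • D j x u := hconj
  have horth' : ∀ i j : Fin n, i ≠ j → ∀ u ∈ U, ⟪D i x u, D j x u⟫ = 0 := horth
  have hρ0 : ∀ u ∈ U, ρ u ≠ 0 := by rw [hρdef]; exact hx0
  have hxt : ∀ v, xt v = g v • x v := by
    intro v; rw [hxtdef, hgdef, hρdef, div_eq_mul_inv]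
  have hρc : ContDiffOn ℝ (⊤ : ℕ∞) ρ U := by rw [hρdef]; exact hx.inner ℝ hx
  have hgc : ContDiffOn ℝ (⊤ : ℕ∞) g U := by
    rw [hgdef]; exact contDiffOn_const.mul (hρc.inv hρ0)
  have hxd : ∀ u ∈ U, DifferentiableAt ℝ x u := fun u hu => diffAt hU hx hu
  have hρd : ∀ u ∈ U, DifferentiableAt ℝ ρ u := fun u hu => diffAt hU hρc hu
  have hgd : ∀ u ∈ U, DifferentiableAt ℝ g u := fun u hu => diffAt hU hgc hu
  have hDxd : ∀ (k : Fin n), ∀ u ∈ U, DifferentiableAt ℝ (D k x) u :=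
    fun k u hu => diffAt hU (contDiffOn_D hU hx k) hu
  have hDρd : ∀ (k : Fin n), ∀ u ∈ U, DifferentiableAt ℝ (D k ρ) u :=
    fun k u hu => diffAt hU (contDiffOn_D hU hρc k) hu
  have hDgd : ∀ (k : Fin n), ∀ u ∈ U, DifferentiableAt ℝ (D k g) u :=
    fun k u hu => diffAt hU (contDiffOn_D hU hgc k) hu
  -- first derivative formulas
  have hDρ : ∀ (k : Fin n), ∀ u ∈ U, D k ρ u = ⟪x u, D k x u⟫ + ⟪D k x u, x u⟫ := by
    intro k u hu
    rw [hρdef]; exact D_inner (hxd u hu) (hxd u hu) k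
  have hDg : ∀ (k : Fin n), ∀ u ∈ U, D k g u = c * (-(D k ρ u) * ((ρ u)^2)⁻¹) := by
    intro k u hu
    rw [hgdef, D_const_mul (f := fun v => (ρ v)⁻¹) ((hρd u hu).inv (hρ0 u hu)) c k, D_inv (hρd u hu) (hρ0 u hu) k]
    rw [div_eq_mul_inv]
  have hDxt : ∀ (k : Fin n), ∀ u ∈ U, D k xt u = D k g u • x u + g u • D k x u := by
    intro k u hu
    rw [D_congr hU (fun v _ => hxt v) hu k, D_smul (hgd u hu) (hxd u hu)]
  -- vanishing criterion
  have hzero : ∀ (k : Fin n), ∀ u ∈ U, D k x u = 0 → D k xt u = 0 := by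
    intro k u hu h0
    rw [hDxt k u hu, hDg k u hu, hDρ k u hu, h0]
    simp
  have hne : ∀ i j : Fin n, ∀ u ∈ U, LinearIndependent ℝ ![pd i xt u, pd j xt u] →
      D i x u ≠ 0 ∧ D j x u ≠ 0 := by
    intro i j u hu hlin
    constructor
    · intro h0
      have h1 : pd i xt u ≠ 0 := by simpa using hlin.ne_zero 0
      exact h1 (hzero i u hu h0)
    · intro h0
      have h1 : pd j xt u ≠ 0 := by simpa using hlin.ne_zero 1
      exact h1 (hzero j u hu h0)
  -- the key identity
  have key : ∀ i j : Fin n, i ≠ j → ∀ u ∈ U,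
      D i (D j xt) u = (cc i j u - D j ρ u / ρ u) • D i xt u
        + (cc j i u - D i ρ u / ρ u) • D j xt u := by
    intro i j hij u hu
    have R0 := hρ0 u hu
    have hRij : D i (D j ρ) u = cc i j u * D i ρ u + cc j i u * D j ρ u := by
      have e1 : D i (D j ρ) u = D i (fun v => ⟪x v, D j x v⟫ + ⟪D j x v, x v⟫) u :=
        D_congr hU (fun v hv => hDρ j v hv) hu i
      rw [e1, D_add ((hxd u hu).inner ℝ (hDxd j u hu)) ((hDxd j u hu).inner ℝ (hxd u hu)) i,
        D_inner (hxd u hu) (hDxd j u hu) i, D_inner (hDxd j u hu) (hxd u hu) i,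
        hconj' i j hij u hu, hDρ i u hu, hDρ j u hu]
      have o1 : ⟪D i x u, D j x u⟫ = 0 := horth' i j hij u hu
      have o2 : ⟪D j x u, D i x u⟫ = 0 := horth' j i hij.symm u hu
      simp only [inner_add_left, inner_add_right, real_inner_smul_left, real_inner_smul_right,
        o1, o2]
      ring
    -- second derivative of g
    have hρ2d : DifferentiableAt ℝ (fun v => (ρ v)^2) u := (hρd u hu).pow 2
    have hρ2ne : (ρ u)^2 ≠ 0 := pow_ne_zero _ R0
    have hq2 : D i (fun v => (ρ v)^2) u = D i ρ u * ρ u + ρ u * D i ρ u := by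
      have e : (fun v => (ρ v)^2) = fun v => ρ v * ρ v := funext fun v => sq (ρ v) ▸ by ring
      rw [e, D_mul (hρd u hu) (hρd u hu) i]
    have hqinv : D i (fun v => ((ρ v)^2)⁻¹) u
        = -(D i ρ u * ρ u + ρ u * D i ρ u) / ((ρ u)^2)^2 := by
      rw [D_inv hρ2d hρ2ne i, hq2]
    have hGij : D i (D j g) u = c * ((-(cc i j u * D i ρ u + cc j i u * D j ρ u)) * ((ρ u)^2)⁻¹
        + (-(D j ρ u)) * (-(D i ρ u * ρ u + ρ u * D i ρ u) / ((ρ u)^2)^2)) := by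
      have e1 : D i (D j g) u = D i (fun v => c * ((-(D j ρ v)) * ((ρ v)^2)⁻¹)) u := by
        refine D_congr hU (fun v hv => ?_) hu i
        rw [hDg j v hv]
      have d1 : DifferentiableAt ℝ (fun v => -(D j ρ v)) u := (hDρd j u hu).neg
      have d2 : DifferentiableAt ℝ (fun v => ((ρ v)^2)⁻¹) u := hρ2d.inv hρ2ne
      rw [e1, D_const_mul (f := fun v => (-(D j ρ v)) * ((ρ v)^2)⁻¹) (d1.mul d2) c i, D_mul d1 d2 i, D_neg i, hqinv, hRij]
    -- assemble
    have e : D i (D j xt) u = D i (fun v => D j g v • x v + g v • D j x v) u :=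
      D_congr hU (fun v hv => hDxt j v hv) hu i
    rw [e, D_add (f := fun v => D j g v • x v) (g := fun v => g v • D j x v) ((hDgd j u hu).smul (hxd u hu)) ((hgd u hu).smul (hDxd j u hu)) i,
      D_smul (hDgd j u hu) (hxd u hu) i, D_smul (hgd u hu) (hDxd j u hu) i,
      hDxt i u hu, hDxt j u hu, hconj' i j hij u hu, hGij, hDg i u hu, hDg j u hu,
      hgdef]
    match_scalars <;> field_simp <;> ring
  -- definition of the coefficients
  refine ⟨fun i j u => ⟪D i (D j x) u, D i x u⟫ / ⟪D i x u, D i x u⟫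
      - (⟪x u, D j x u⟫ + ⟪D j x u, x u⟫) / ⟪x u, x u⟫, ?_, ?_⟩
  · intro i j hij
    have hSU : {u | u ∈ U ∧ LinearIndependent ℝ ![pd i xt u, pd j xt u]} ⊆ U := fun u h => h.1
    have h1 : ContDiffOn ℝ (⊤ : ℕ∞) (fun u => ⟪D i (D j x) u, D i x u⟫) U :=
      (contDiffOn_D hU (contDiffOn_D hU hx j) i).inner ℝ (contDiffOn_D hU hx i)
    have h2 : ContDiffOn ℝ (⊤ : ℕ∞) (fun u => ⟪D i x u, D i x u⟫) U :=
      (contDiffOn_D hU hx i).inner ℝ (contDiffOn_D hU hx i)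
    have h3 : ContDiffOn ℝ (⊤ : ℕ∞) (fun u => ⟪x u, D j x u⟫ + ⟪D j x u, x u⟫) U :=
      (hx.inner ℝ (contDiffOn_D hU hx j)).add ((contDiffOn_D hU hx j).inner ℝ hx)
    have h4 : ContDiffOn ℝ (⊤ : ℕ∞) (fun u => ⟪x u, x u⟫) U := hx.inner ℝ hx
    refine ContDiffOn.sub (ContDiffOn.div (h1.mono hSU) (h2.mono hSU) ?_)
      (ContDiffOn.div (h3.mono hSU) (h4.mono hSU) ?_)
    · exact fun u hu => inner_self_ne_zero.mpr (hne i j u hu.1 hu.2).1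
    · exact fun u hu => hx0 u hu.1
  · intro i j hij u hu hlin
    obtain ⟨hPi, hPj⟩ := hne i j u hu hlin
    have hv1 : ⟪D i (D j x) u, D i x u⟫ / ⟪D i x u, D i x u⟫ = cc i j u := by
      rw [hconj' i j hij u hu]
      rw [inner_add_left, real_inner_smul_left, real_inner_smul_left,
        horth' j i hij.symm u hu, mul_zero, add_zero, mul_div_assoc,
        div_self (inner_self_ne_zero.mpr hPi), mul_one]
    have hv2 : ⟪D j (D i x) u, D j x u⟫ / ⟪D j x u, D j x u⟫ = cc j i u := by
      rw [hconj' j i hij.symm u hu]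
      rw [inner_add_left, real_inner_smul_left, real_inner_smul_left,
        horth' i j hij u hu, mul_zero, add_zero, mul_div_assoc,
        div_self (inner_self_ne_zero.mpr hPj), mul_one]
    have hk := key i j hij u hu
    show D i (D j xt) u = (⟪D i (D j x) u, D i x u⟫ / ⟪D i x u, D i x u⟫
        - (⟪x u, D j x u⟫ + ⟪D j x u, x u⟫) / ⟪x u, x u⟫) • D i xt u
      + (⟪D j (D i x) u, D j x u⟫ / ⟪D j x u, D j x u⟫
        - (⟪x u, D i x u⟫ + ⟪D i x u, x u⟫) / ⟪x u, x u⟫) • D j xt u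
    rw [hv1, hv2, ← hDρ j u hu, ← hDρ i u hu,
      show (⟪x u, x u⟫ : ℝ) = ρ u from by rw [hρdef]]
    exact hk
end

section
/- Let x : U → ℝ^m be smooth, nowhere zero, with pairwise orthogonal nonzero coordinate tangent vectors ∂_i x, and let x̃ = (c/(x·x))x with c ≠ 0, c ≠ x·x everywhere. Then for each i, the function λ_i := c/(x·x) satisfies ∂_i x̃ − λ_i ∂_i x = −2 λ_i ((∂_i x · δx)/(δx·δx)) δx, where δx = x̃ − x; i.e., ∂_i x̃ − λ_i ∂_i x is everywhere parallel to δx. -/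
open RealInnerProductSpace

theorem stmt_16 {n m : ℕ} (U : Set (E n)) (hU : IsOpen U)
    (x : E n → E m) (hx : ContDiffOn ℝ (⊤ : ℕ∞) x U)
    (hx0 : ∀ u ∈ U, x u ≠ 0)
    (hpd0 : ∀ i : Fin n, ∀ u ∈ U, pd i x u ≠ 0)
    (horth : ∀ i j : Fin n, i ≠ j → ∀ u ∈ U, ⟪pd i x u, pd j x u⟫ = 0)
    (c : ℝ) (hc : c ≠ 0) (hcne : ∀ u ∈ U, ⟪x u, x u⟫ ≠ c)
    (xt : E n → E m) (hxtdef : ∀ u, xt u = (c / ⟪x u, x u⟫) • x u) :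
    ∀ i : Fin n, ∀ u ∈ U,
      pd i xt u - (c / ⟪x u, x u⟫) • pd i x u
        = (-2 * (c / ⟪x u, x u⟫) *
            (⟪pd i x u, xt u - x u⟫ / ⟪xt u - x u, xt u - x u⟫)) • (xt u - x u) := by
  intro i u hu
  have hxd : DifferentiableAt ℝ x u :=
    (hx.contDiffAt (hU.mem_nhds hu)).differentiableAt (by simp)
  set v := EuclideanSpace.single i (1 : ℝ) with hv
  set r : ℝ := ⟪x u, x u⟫ with hr
  have hr0 : r ≠ 0 := inner_self_ne_zero.mpr (hx0 u hu)
  have hrc : r ≠ c := hcne u hu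
  have hxH : HasFDerivAt x (fderiv ℝ x u) u := hxd.hasFDerivAt
  have hgH : HasFDerivAt (fun w => ⟪x w, x w⟫)
      (fderiv ℝ (fun w => ⟪x w, x w⟫) u) u := (hxd.inner ℝ hxd).hasFDerivAt
  have hgv : fderiv ℝ (fun w => ⟪x w, x w⟫) u v = 2 * ⟪pd i x u, x u⟫ := by
    rw [fderiv_inner_apply ℝ hxd hxd]
    unfold pd
    rw [real_inner_comm]; ring
  have hfH : HasFDerivAt (fun w => c / ⟪x w, x w⟫)
      (c • ((ContinuousLinearMap.smulRight (1 : ℝ →L[ℝ] ℝ) (-(r ^ 2)⁻¹)).comp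
        (fderiv ℝ (fun w => ⟪x w, x w⟫) u))) u := by
    have h1 : (fun w => c / ⟪x w, x w⟫) = fun w => c • ((fun t : ℝ => t⁻¹) ∘ fun w => ⟪x w, x w⟫) w := by
      funext w; simp [div_eq_mul_inv, Function.comp]
    rw [h1]
    exact ((hasFDerivAt_inv hr0).comp u hgH).const_smul c
  have hxtH := hfH.smul hxH
  have hxt' : HasFDerivAt xt ((c / ⟪x u, x u⟫) • fderiv ℝ x u +
      (c • ((ContinuousLinearMap.smulRight (1 : ℝ →L[ℝ] ℝ) (-(r ^ 2)⁻¹)).comp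
        (fderiv ℝ (fun w => ⟪x w, x w⟫) u))).smulRight (x u)) u := by
    have : xt = fun w => (c / ⟪x w, x w⟫) • x w := funext hxtdef
    rw [this]; exact hxtH
  set p : ℝ := ⟪pd i x u, x u⟫ with hp
  have hpdxt : pd i xt u = (c / r) • pd i x u +
      (c * (2 * p * -(r ^ 2)⁻¹)) • x u := by
    unfold pd
    rw [hxt'.fderiv]
    simp only [ContinuousLinearMap.add_apply, ContinuousLinearMap.smul_apply,
      ContinuousLinearMap.smulRight_apply, ContinuousLinearMap.coe_comp', Function.comp_apply,
      ContinuousLinearMap.one_apply, ← hv, hgv, ← hr, ← hp, smul_eq_mul]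
  have hδ : xt u - x u = (c / r - 1) • x u := by
    rw [hxtdef u, ← hr, sub_smul, one_smul]
  set t : ℝ := c / r - 1 with ht
  have ht0 : t ≠ 0 := by
    rw [ht, sub_ne_zero]
    intro h
    refine hrc ?_
    field_simp at h
    linarith
  rw [hpdxt, hδ, real_inner_smul_right, real_inner_smul_left, real_inner_smul_right,
    ← hr, ← hp, smul_smul, add_sub_cancel_left]
  congr 1
  field_simp
end
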